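/- arXiv:1804.00176 — 4 statements merged into one kernel-verified Lean document; each statement's English description precedes it below -/
import Mathlib

section
/- Let A₀ ∈ ℂ \ {0} and let h be a bounded holomorphic function on a punctured neighborhood of c₁ (with |h(c)| ≤ C for some constant C). Fix a branch of the square root. Define c(n) := −(2π/(A₀ n))² and r_n := |c(n)|^{1+β} for a fixed small β ∈ (0, 1/2). Then for all sufficiently large n, on the circle |c − (c₁ + c(n))| = r_n one has | −2πi/(A₀ √(c − c₁)) + n | ≥ C' n^{1−2β} for some constant C' > 0; in particular this quantity exceeds |h(c)| for large n, so by Rouché's theorem the equation −2πi/(A₀√(c−c₁)) + n + h(c) = 0 has exactly one solution in the disk D(c₁ + c(n), r_n). -/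
/-!
Put `s = 2πi/(A₀ n)`, so that the centre of the disk is `c₁ + s²` and its radius is
`r = ‖s‖² ρ` with `ρ = (2π/(‖A₀‖ n))^(2β) → 0`. On the disk,
`(√(c-c₁) - s)(√(c-c₁) + s) = c - (c₁ + s²)` is smaller than `(‖s‖/2)²`, so by connectedness the
branch stays within `‖s‖/2` of `s`. The main term equals `n (√(c-c₁) - s)/√(c-c₁)`, which gives
the lower bound `n ρ/4 ≍ n^(1-2β)` on the circle.
Instead of Rouché's theorem, the equation is solved as the fixed-point problem
`c = c₁ + s² (n/(n + h c))²`: by the Schwarz lemma `h` is `4C/r`-Lipschitz near the centre,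
so this map is a contraction of `closedBall (c₁ + s²) (r/8)`, and it sends the whole disk there.
-/

open Filter Metric Set Topology

theorem norm_sub_lt_of_isPreconnected {X : Type*} [TopologicalSpace X] {S : Set X}
    (hS : IsPreconnected S) {f : X → ℂ} (hf : ContinuousOn f S) {s : ℂ} {x₀ : X}
    (hx₀ : x₀ ∈ S) (hfx₀ : f x₀ = s) (hsmall : ∀ x ∈ S, ‖f x ^ 2 - s ^ 2‖ < (‖s‖ / 2) ^ 2)
    {x : X} (hx : x ∈ S) : ‖f x - s‖ < ‖s‖ / 2 := by
  have ht : 0 < ‖s‖ / 2 := by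
    have : 0 < (‖s‖ / 2) ^ 2 := by simpa [hfx₀] using hsmall x₀ hx₀
    nlinarith [norm_nonneg s]
  -- `f x` is close to one of `±s`, and the two neighbourhoods are disjoint.
  have hcover : f '' S ⊆ ball s (‖s‖ / 2) ∪ ball (-s) (‖s‖ / 2) := by
    rintro _ ⟨y, hy, rfl⟩
    by_contra! hfar
    simp only [mem_union, mem_ball, dist_eq_norm, sub_neg_eq_add, not_or, not_lt] at hfar
    have := hsmall y hy
    rw [show f y ^ 2 - s ^ 2 = (f y - s) * (f y + s) by ring, norm_mul, sq] at this
    nlinarith [mul_le_mul hfar.1 hfar.2 ht.le (norm_nonneg _)]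
  have hdisj : Disjoint (ball s (‖s‖ / 2)) (ball (-s) (‖s‖ / 2)) := by
    refine ball_disjoint_ball ?_
    have : ‖s + s‖ = 2 * ‖s‖ := by rw [← two_mul, norm_mul, Complex.norm_two]
    rw [dist_eq_norm, sub_neg_eq_add, this]
    linarith
  have hleft := (hS.image f hf).subset_left_of_subset_union isOpen_ball isOpen_ball hdisj hcover
    ⟨s, ⟨x₀, hx₀, hfx₀⟩, mem_ball_self ht⟩
  simpa [dist_eq_norm] using hleft (mem_image_of_mem f hx)

theorem dist_le_of_differentiableOn_ball {E F : Type*} [NormedAddCommGroup E] [NormedSpace ℂ E]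
    [NormedAddCommGroup F] [NormedSpace ℂ F] {f : E → F} {a : E} {R C : ℝ} (hR : 0 < R)
    (hd : DifferentiableOn ℂ f (ball a R)) (hC : ∀ z ∈ ball a R, ‖f z‖ ≤ C) {z w : E}
    (hz : z ∈ closedBall a (R / 8)) (hw : w ∈ closedBall a (R / 8)) :
    dist (f z) (f w) ≤ 4 * C / R * dist z w := by
  rw [mem_closedBall] at hz hw
  have hball : ball w (R / 2) ⊆ ball a R := ball_subset_ball' (by linarith)
  have hmaps : MapsTo f (ball w (R / 2)) (closedBall (f w) (2 * C)) := fun y hy => by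
    rw [mem_closedBall, dist_eq_norm]
    have := hC w (hball (mem_ball_self (by positivity)))
    linarith [norm_sub_le (f y) (f w), hC y (hball hy)]
  have hzw : z ∈ ball w (R / 2) := by
    rw [mem_ball]; linarith [dist_triangle_right z w a]
  calc dist (f z) (f w) ≤ 2 * C / (R / 2) * dist z w :=
        Complex.dist_le_div_mul_dist_of_mapsTo_ball (hd.mono hball) hmaps hzw
    _ = 4 * C / R * dist z w := by field_simp; ring

theorem existsUnique_fixedPoint_of_mapsTo_closedBall {X : Type*} [MetricSpace X]
    [CompleteSpace X] {g : X → X} {a : X} {ρ : ℝ} (hρ : 0 ≤ ρ) {K : NNReal} (hK : K < 1)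
    (hg : MapsTo g (closedBall a ρ) (closedBall a ρ))
    (hlip : LipschitzOnWith K g (closedBall a ρ)) :
    ∃! y, y ∈ closedBall a ρ ∧ g y = y := by
  obtain ⟨y, hy, hfix, -⟩ := ContractingWith.exists_fixedPoint' isClosed_closedBall.isComplete hg
    ⟨hK, hlip.mapsToRestrict hg⟩ (mem_closedBall_self hρ) (edist_ne_top _ _)
  refine ⟨y, ⟨hy, hfix⟩, fun y' ⟨hy', hfix'⟩ => dist_le_zero.mp ?_⟩
  have := hlip.dist_le_mul y' hy' y hy
  rw [hfix', hfix.eq] at this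
  nlinarith [dist_nonneg (x := y') (y := y), (show (K : ℝ) < 1 from hK)]

section Pointwise

variable {m η η' s z : ℂ}

theorem three_quarters_norm_le_norm_add (hη : 4 * ‖η‖ ≤ ‖m‖) : 3 * ‖m‖ / 4 ≤ ‖m + η‖ := by
  have := norm_sub_le (m + η) η
  rw [add_sub_cancel_right] at this
  linarith

theorem norm_div_add_sq_sub_div_add_sq_le (hm : m ≠ 0) (hη : 4 * ‖η‖ ≤ ‖m‖)
    (hη' : 4 * ‖η'‖ ≤ ‖m‖) :
    ‖(m / (m + η)) ^ 2 - (m / (m + η')) ^ 2‖ ≤ 8 / ‖m‖ * ‖η - η'‖ := by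
  have hμ : 0 < ‖m‖ := norm_pos_iff.mpr hm
  have hp := three_quarters_norm_le_norm_add hη
  have hp' := three_quarters_norm_le_norm_add hη'
  have hp0 : m + η ≠ 0 := norm_pos_iff.mp (by linarith)
  have hp0' : m + η' ≠ 0 := norm_pos_iff.mp (by linarith)
  have hsum : ‖(m + η) + (m + η')‖ ≤ 5 * ‖m‖ / 2 := by
    linarith [norm_add_le (m + η) (m + η'), norm_add_le m η, norm_add_le m η']
  have hden : (3 * ‖m‖ / 4) ^ 4 ≤ ‖m + η‖ ^ 2 * ‖m + η'‖ ^ 2 := by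
    have := mul_le_mul (pow_le_pow_left₀ (by positivity) hp 2)
      (pow_le_pow_left₀ (by positivity) hp' 2) (by positivity) (by positivity)
    linarith
  have hid : (m / (m + η)) ^ 2 - (m / (m + η')) ^ 2
      = m ^ 2 * (η' - η) * ((m + η) + (m + η')) / ((m + η) ^ 2 * (m + η') ^ 2) := by
    field_simp; ring
  rw [hid, norm_div, norm_mul, norm_mul, norm_mul, norm_pow, norm_pow, norm_pow, norm_sub_rev]
  calc ‖m‖ ^ 2 * ‖η - η'‖ * ‖(m + η) + (m + η')‖ / (‖m + η‖ ^ 2 * ‖m + η'‖ ^ 2)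
      ≤ ‖m‖ ^ 2 * ‖η - η'‖ * (5 * ‖m‖ / 2) / (3 * ‖m‖ / 4) ^ 4 := by gcongr
    _ ≤ 8 / ‖m‖ * ‖η - η'‖ := by
      rw [div_le_iff₀ (by positivity)]
      field_simp
      nlinarith [norm_nonneg (η - η'), pow_pos hμ 4]

theorem norm_lt_of_norm_sub_lt (hzs : ‖z - s‖ < ‖s‖ / 2) : ‖z‖ < 3 * ‖s‖ / 2 := by
  linarith [norm_le_norm_add_norm_sub' z s]

theorem lt_norm_of_norm_sub_lt (hzs : ‖z - s‖ < ‖s‖ / 2) : ‖s‖ / 2 < ‖z‖ := by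
  linarith [norm_sub_norm_le s z, norm_sub_rev s z]

theorem norm_mul_sq_sub_sq_div_le (hzs : ‖z - s‖ < ‖s‖ / 2) :
    ‖m‖ * ‖z ^ 2 - s ^ 2‖ / (4 * ‖s‖ ^ 2) ≤ ‖m - m * s / z‖ := by
  have hz := lt_norm_of_norm_sub_lt hzs
  have hz' := norm_lt_of_norm_sub_lt hzs
  have hσ : 0 < ‖s‖ := by linarith [norm_nonneg (z - s)]
  have hz0 : z ≠ 0 := norm_pos_iff.mp (by linarith)
  have hsum : ‖z + s‖ ≤ 5 * ‖s‖ / 2 := by linarith [norm_add_le z s]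
  rw [show z ^ 2 - s ^ 2 = (z - s) * (z + s) by ring,
    show m - m * s / z = m * (z - s) / z by field_simp, norm_mul, norm_div, norm_mul]
  calc ‖m‖ * (‖z - s‖ * ‖z + s‖) / (4 * ‖s‖ ^ 2)
      ≤ ‖m‖ * (‖z - s‖ * (5 * ‖s‖ / 2)) / (4 * ‖s‖ ^ 2) := by gcongr
    _ ≤ ‖m‖ * ‖z - s‖ / (3 * ‖s‖ / 2) := by
      rw [div_le_div_iff₀ (by positivity) (by positivity)]
      nlinarith [mul_nonneg (norm_nonneg m) (norm_nonneg (z - s)), pow_pos hσ 3]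
    _ ≤ ‖m‖ * ‖z - s‖ / ‖z‖ := by gcongr

theorem sub_mul_div_add_eq_zero_iff (hm : m ≠ 0) (hη : 4 * ‖η‖ ≤ ‖m‖)
    (hzs : ‖z - s‖ < ‖s‖ / 2) : m - m * s / z + η = 0 ↔ z ^ 2 = (m * s / (m + η)) ^ 2 := by
  have hz := lt_norm_of_norm_sub_lt hzs
  have hσ : 0 < ‖s‖ := by linarith [norm_nonneg (z - s)]
  have hz0 : z ≠ 0 := norm_pos_iff.mp (by linarith)
  have hs0 : s ≠ 0 := norm_pos_iff.mp hσ
  have hp := three_quarters_norm_le_norm_add hη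
  have hμ : 0 < ‖m‖ := norm_pos_iff.mpr hm
  have hp0 : m + η ≠ 0 := norm_pos_iff.mp (by linarith)
  constructor
  · intro heq
    have h1 : m * s / z = m + η := by linear_combination -heq
    rw [div_eq_iff hz0] at h1
    rw [h1, mul_div_cancel_left₀ z hp0]
  · intro hsq
    rcases sq_eq_sq_iff_eq_or_eq_neg.mp hsq with rfl | rfl
    · field_simp; ring
    · -- `m s / (m + η)` is within `‖s‖ / 3` of `s`, so its negative is far from `s`.
      have hw : ‖m * s / (m + η) - s‖ ≤ ‖s‖ / 3 := by
        rw [show m * s / (m + η) - s = -(s * η) / (m + η) by field_simp; ring, norm_div,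
          norm_neg, norm_mul, div_le_iff₀ (by linarith)]
        nlinarith
      have : ‖s + s‖ = 2 * ‖s‖ := by rw [← two_mul, norm_mul, Complex.norm_two]
      have := norm_sub_norm_le (s + s) (s - m * s / (m + η))
      rw [show -(m * s / (m + η)) - s = -(s + s - (s - m * s / (m + η))) by ring,
        norm_neg] at hzs
      rw [norm_sub_rev] at this
      linarith

end Pointwise

section ClosedBall

variable {c₁ s : ℂ} {r : ℝ} {sq : ℂ → ℂ}

theorem norm_sub_lt_of_mem_closedBall (hr : 0 ≤ r) (hrs : r < (‖s‖ / 2) ^ 2)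
    (hsq : ∀ c ∈ closedBall (c₁ + s ^ 2) r, sq c ^ 2 = c - c₁)
    (hsqc : ContinuousOn sq (closedBall (c₁ + s ^ 2) r)) (hs : sq (c₁ + s ^ 2) = s) :
    ∀ c ∈ closedBall (c₁ + s ^ 2) r, ‖sq c - s‖ < ‖s‖ / 2 := by
  refine fun c hc => norm_sub_lt_of_isPreconnected (convex_closedBall _ _).isPreconnected hsqc
    (mem_closedBall_self hr) hs (fun c hc => ?_) hc
  rw [hsq c hc, sub_sub, ← dist_eq_norm]
  exact (mem_closedBall.mp hc).trans_lt hrs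

theorem existsUnique_mem_ball_sub_mul_div_add_eq_zero {m : ℂ} {h : ℂ → ℂ} {C : ℝ} (hm : m ≠ 0)
    (hr : 0 < r) (hsq : ∀ c ∈ closedBall (c₁ + s ^ 2) r, sq c ^ 2 = c - c₁)
    (hnear : ∀ c ∈ closedBall (c₁ + s ^ 2) r, ‖sq c - s‖ < ‖s‖ / 2)
    (hd : DifferentiableOn ℂ h (ball (c₁ + s ^ 2) r))
    (hC : ∀ c ∈ closedBall (c₁ + s ^ 2) r, ‖h c‖ ≤ C) (hCm : 4 * C ≤ ‖m‖)
    (hCr : 64 * ‖s‖ ^ 2 * C ≤ r * ‖m‖) :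
    ∃! c, c ∈ ball (c₁ + s ^ 2) r ∧ m - m * s / sq c + h c = 0 := by
  set a := c₁ + s ^ 2
  have hμ : 0 < ‖m‖ := norm_pos_iff.mpr hm
  have hhm : ∀ c ∈ closedBall a r, 4 * ‖h c‖ ≤ ‖m‖ := fun c hc => by linarith [hC c hc]
  -- Solutions are the fixed points of `g`: square the equation and solve for `c`.
  let g c := c₁ + s ^ 2 * (m / (m + h c)) ^ 2
  have hsol : ∀ c ∈ closedBall a r, m - m * s / sq c + h c = 0 ↔ g c = c := fun c hc => by
    have hsq_div : (m * s / (m + h c)) ^ 2 = s ^ 2 * (m / (m + h c)) ^ 2 := by ring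
    rw [sub_mul_div_add_eq_zero_iff hm (hhm c hc) (hnear c hc), hsq c hc, hsq_div, eq_comm,
      eq_sub_iff_add_eq']
  have hg : ∀ {η η'}, 4 * ‖η‖ ≤ ‖m‖ → 4 * ‖η'‖ ≤ ‖m‖ →
      ‖s ^ 2 * (m / (m + η)) ^ 2 - s ^ 2 * (m / (m + η')) ^ 2‖
        ≤ 8 * ‖s‖ ^ 2 / ‖m‖ * ‖η - η'‖ := fun hη hη' => by
    rw [← mul_sub, norm_mul, norm_pow]
    calc ‖s‖ ^ 2 * ‖(m / (m + _)) ^ 2 - (m / (m + _)) ^ 2‖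
        ≤ ‖s‖ ^ 2 * (8 / ‖m‖ * ‖_ - _‖) := by
          gcongr; exact norm_div_add_sq_sub_div_add_sq_le hm hη hη'
      _ = _ := by ring
  have hmaps : MapsTo g (closedBall a r) (closedBall a (r / 8)) := fun c hc => by
    have := hg (hhm c hc) (η' := 0) (by simp)
    rw [add_zero, div_self hm, one_pow, mul_one, sub_zero] at this
    rw [mem_closedBall, dist_eq_norm, show g c - a = s ^ 2 * (m / (m + h c)) ^ 2 - s ^ 2 by ring]
    refine this.trans ?_
    rw [div_mul_eq_mul_div, div_le_div_iff₀ hμ (by norm_num)]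
    nlinarith [hC c hc, norm_nonneg (h c), sq_nonneg ‖s‖]
  have hsub : closedBall a (r / 8) ⊆ closedBall a r := closedBall_subset_closedBall (by linarith)
  have hlip : LipschitzOnWith (1 / 2) g (closedBall a (r / 8)) := by
    refine .of_dist_le_mul fun c hc c' hc' => ?_
    have hL := dist_le_of_differentiableOn_ball hr hd
      (fun z hz => hC z (ball_subset_closedBall hz)) hc hc'
    rw [dist_eq_norm,
      show g c - g c' = s ^ 2 * (m / (m + h c)) ^ 2 - s ^ 2 * (m / (m + h c')) ^ 2 by ring]
    refine (hg (hhm c (hsub hc)) (hhm c' (hsub hc'))).trans ?_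
    rw [← dist_eq_norm]
    calc 8 * ‖s‖ ^ 2 / ‖m‖ * dist (h c) (h c')
        ≤ 8 * ‖s‖ ^ 2 / ‖m‖ * (4 * C / r * dist c c') := by gcongr
      _ ≤ (1 / 2 : NNReal) * dist c c' := by
        rw [← mul_assoc]
        gcongr
        rw [div_mul_div_comm, div_le_iff₀ (by positivity)]
        push_cast
        nlinarith
  obtain ⟨y, ⟨hy, hgy⟩, huniq⟩ := existsUnique_fixedPoint_of_mapsTo_closedBall (by positivity)
    (by norm_num) (hmaps.mono_left hsub) hlip
  refine ⟨y, ⟨closedBall_subset_ball (by linarith) hy, (hsol y (hsub hy)).2 hgy⟩, ?_⟩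
  rintro c ⟨hc, hsolc⟩
  have hgc := (hsol c (ball_subset_closedBall hc)).1 hsolc
  exact huniq c ⟨hgc ▸ hmaps (ball_subset_closedBall hc), hgc⟩

end ClosedBall

theorem le_norm_on_sphere_and_existsUnique_zero_in_ball {c₁ s m : ℂ} {ρ C : ℝ} {U : Set ℂ}
    {h sq : ℂ → ℂ} (hs : s ≠ 0) (hm : m ≠ 0) (hρ0 : 0 < ρ) (hρ : ρ < 1 / 4)
    (hCm : 4 * C ≤ ‖m‖) (hCρ : 64 * C ≤ ρ * ‖m‖)
    (hsub : closedBall (c₁ + s ^ 2) (‖s‖ ^ 2 * ρ) ⊆ U) (hha : AnalyticOnNhd ℂ h U)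
    (hhb : ∀ c ∈ U, ‖h c‖ ≤ C) (hsqa : AnalyticOnNhd ℂ sq U)
    (hsq : ∀ c ∈ U, sq c ^ 2 = c - c₁) (hbr : sq (c₁ + s ^ 2) = s) :
    (∀ c ∈ sphere (c₁ + s ^ 2) (‖s‖ ^ 2 * ρ), ‖m‖ * ρ / 4 ≤ ‖m - m * s / sq c‖) ∧
      ∃! c, c ∈ ball (c₁ + s ^ 2) (‖s‖ ^ 2 * ρ) ∧ m - m * s / sq c + h c = 0 := by
  have hσ : 0 < ‖s‖ := norm_pos_iff.mpr hs
  have hr : 0 < ‖s‖ ^ 2 * ρ := by positivity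
  have hsq' : ∀ c ∈ closedBall (c₁ + s ^ 2) (‖s‖ ^ 2 * ρ), sq c ^ 2 = c - c₁ :=
    fun c hc => hsq c (hsub hc)
  have hnear := norm_sub_lt_of_mem_closedBall hr.le (by nlinarith [pow_pos hσ 2]) hsq'
    (hsqa.continuousOn.mono hsub) hbr
  refine ⟨fun c hc => ?_, existsUnique_mem_ball_sub_mul_div_add_eq_zero hm hr hsq' hnear
    (hha.mono (ball_subset_closedBall.trans hsub)).differentiableOn (fun c hc => hhb c (hsub hc))
    hCm (by nlinarith [pow_pos hσ 2])⟩
  have hc' := sphere_subset_closedBall hc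
  refine le_trans (le_of_eq ?_) (norm_mul_sq_sub_sq_div_le (hnear c hc'))
  rw [hsq' c hc', sub_sub, ← dist_eq_norm, mem_sphere.mp hc]
  field_simp

theorem neg_div_sq_eq_sq_mul_I_div (a b : ℂ) : -(a / b) ^ 2 = (a * Complex.I / b) ^ 2 := by
  rw [div_pow, div_pow, mul_pow, Complex.I_sq]
  ring

theorem neg_div_mul_add_eq_sub_mul_div {a b m : ℂ} (hm : m ≠ 0) (z : ℂ) :
    -a / (b * z) + m = m - m * (a / (b * m)) / z := by
  have : m * (a / (b * m)) = a / b := by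
    rw [mul_comm b, ← div_div, mul_div_assoc', mul_div_cancel₀ _ hm]
  rw [this, div_div]
  ring

theorem Real.sq_rpow_one_add {x : ℝ} (hx : 0 < x) (β : ℝ) :
    (x ^ 2) ^ (1 + β) = x ^ 2 * x ^ (2 * β) := by
  rw [← Real.rpow_natCast, ← Real.rpow_mul hx.le, ← Real.rpow_add hx]
  norm_num [mul_add]

theorem Real.div_rpow_mul_self {a x : ℝ} (ha : 0 ≤ a) (hx : 0 < x) (p : ℝ) :
    (a / x) ^ p * x = a ^ p * x ^ (1 - p) := by
  rw [Real.div_rpow ha hx.le, Real.rpow_sub hx, Real.rpow_one]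
  field_simp

theorem stmt5_general (c₁ A₀ : ℂ) (hA : A₀ ≠ 0) (β : ℝ) (hβ : β ∈ Set.Ioo 0 (1/2))
    (C : ℝ) (U : Set ℂ)
    (h sq : ℂ → ℂ)
    (hha : AnalyticOnNhd ℂ h U)
    (hhb : ∀ c ∈ U, ‖h c‖ ≤ C)
    (hsqa : AnalyticOnNhd ℂ sq U)
    (hsq : ∀ c ∈ U, (sq c) ^ 2 = c - c₁)
    (cn : ℕ → ℂ) (hcn : ∀ n : ℕ, cn n = -(2 * Real.pi / (A₀ * n)) ^ 2)
    (rn : ℕ → ℝ) (hrn : ∀ n : ℕ, rn n = ‖cn n‖ ^ ((1:ℝ) + β))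
    (hdisk : ∀ᶠ n in Filter.atTop, Metric.closedBall (c₁ + cn n) (rn n) ⊆ U)
    (hbranch : ∀ᶠ n in Filter.atTop, sq (c₁ + cn n) = 2 * Real.pi * Complex.I / (A₀ * n)) :
    ∃ C' > 0, ∀ᶠ n in Filter.atTop,
      (∀ c : ℂ, ‖c - (c₁ + cn n)‖ = rn n →
        C' * (n : ℝ) ^ ((1:ℝ) - 2 * β)
          ≤ ‖-(2 * Real.pi * Complex.I) / (A₀ * sq c) + n‖) ∧
      (∃! c : ℂ, c ∈ Metric.ball (c₁ + cn n) (rn n) ∧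
        -(2 * Real.pi * Complex.I) / (A₀ * sq c) + n + h c = 0) := by
  obtain ⟨hβ0, hβ1⟩ := hβ
  set a := 2 * Real.pi / ‖A₀‖
  have ha : 0 < a := by have := norm_pos_iff.mpr hA; positivity
  refine ⟨a ^ (2 * β) / 4, by positivity, ?_⟩
  have hρ : Tendsto (fun n : ℕ => (a / n) ^ (2 * β)) atTop (𝓝 0) := by
    simpa [Real.zero_rpow (by positivity : 2 * β ≠ 0)] using
      (tendsto_const_div_atTop_nhds_zero_nat a).rpow_const (Or.inr (by positivity : 0 ≤ 2 * β))
  have hρn : Tendsto (fun n : ℕ => a ^ (2 * β) * (n : ℝ) ^ (1 - 2 * β)) atTop atTop :=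
    ((tendsto_rpow_atTop (by linarith)).comp tendsto_natCast_atTop_atTop).const_mul_atTop
      (Real.rpow_pos_of_pos ha _)
  filter_upwards [hdisk, hbranch, hρ.eventually_lt_const (by norm_num : (0 : ℝ) < 1 / 4),
    hρn.eventually_ge_atTop (64 * C), tendsto_natCast_atTop_atTop.eventually_ge_atTop (4 * C),
    eventually_gt_atTop 0] with n hsub hbr hρ_lt hCρ hCm hn
  have hn0 : (n : ℂ) ≠ 0 := Nat.cast_ne_zero.mpr hn.ne'
  set s : ℂ := 2 * Real.pi * Complex.I / (A₀ * n) with hs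
  have hσ : ‖s‖ = a / n := by simp [s, a, abs_of_pos Real.pi_pos, div_div]
  have hσ0 : 0 < ‖s‖ := hσ ▸ by positivity
  have hr : rn n = ‖s‖ ^ 2 * (a / n) ^ (2 * β) := by
    rw [hrn, hcn, neg_div_sq_eq_sq_mul_I_div, norm_pow, Real.sq_rpow_one_add hσ0, hσ]
  rw [← Real.div_rpow_mul_self ha.le (Nat.cast_pos.mpr hn)] at hCρ
  rw [hcn, neg_div_sq_eq_sq_mul_I_div] at hsub hbr ⊢
  rw [hr] at hsub ⊢
  obtain ⟨hbound, hunique⟩ := le_norm_on_sphere_and_existsUnique_zero_in_ball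
    (s := s) (m := n) (norm_pos_iff.mp hσ0) hn0 (by positivity) hρ_lt (by simpa using hCm)
    (by simpa using hCρ) hsub hha hhb hsqa hsq hbr
  simp only [neg_div_mul_add_eq_sub_mul_div hn0, ← hs]
  refine ⟨fun c hc => ?_, hunique⟩
  rw [div_mul_eq_mul_div, ← Real.div_rpow_mul_self ha.le (Nat.cast_pos.mpr hn)]
  simpa [mul_comm] using hbound c (mem_sphere_iff_norm.mpr hc)

/-- Rouché argument in the parabolic case `ν = 1`: with `c(n) = -(2π/(A₀n))²` and
`r_n = |c(n)|^(1+β)`, on the circle `|c - (c₁+c(n))| = r_n` the main term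
`-2πi/(A₀√(c-c₁)) + n` is bounded below by `C'n^(1-2β)`, and the equation
`-2πi/(A₀√(c-c₁)) + n + h(c) = 0` has exactly one solution in `D(c₁+c(n), r_n)`. -/
theorem stmt5 (c₁ A₀ : ℂ) (hA : A₀ ≠ 0) (β : ℝ) (hβ : β ∈ Set.Ioo 0 (1/2))
    (C : ℝ) (hC : 0 ≤ C) (U : Set ℂ) (hU : IsOpen U) (hc₁U : c₁ ∉ U)
    (h sq : ℂ → ℂ)
    (hha : AnalyticOnNhd ℂ h U)
    (hhb : ∀ c ∈ U, ‖h c‖ ≤ C)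
    (hsqa : AnalyticOnNhd ℂ sq U)
    (hsq : ∀ c ∈ U, (sq c) ^ 2 = c - c₁)
    (cn : ℕ → ℂ) (hcn : ∀ n : ℕ, cn n = -(2 * Real.pi / (A₀ * n)) ^ 2)
    (rn : ℕ → ℝ) (hrn : ∀ n : ℕ, rn n = ‖cn n‖ ^ ((1:ℝ) + β))
    (hdisk : ∀ᶠ n in Filter.atTop, Metric.closedBall (c₁ + cn n) (rn n) ⊆ U)
    (hbranch : ∀ᶠ n in Filter.atTop, sq (c₁ + cn n) = 2 * Real.pi * Complex.I / (A₀ * n)) :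
    ∃ C' > 0, ∀ᶠ n in Filter.atTop,
      (∀ c : ℂ, ‖c - (c₁ + cn n)‖ = rn n →
        C' * (n : ℝ) ^ ((1:ℝ) - 2 * β)
          ≤ ‖-(2 * Real.pi * Complex.I) / (A₀ * sq c) + n‖) ∧
      (∃! c : ℂ, c ∈ Metric.ball (c₁ + cn n) (rn n) ∧
        -(2 * Real.pi * Complex.I) / (A₀ * sq c) + n + h c = 0) :=
  stmt5_general c₁ A₀ hA β hβ C U h sq hha hhb hsqa hsq cn hcn rn hrn hdisk hbranch
end

section
/- Let c₁ ∈ ℂ, μ₁ ∈ ℂ with |μ₁| > 1, K₀ ≠ 0, α ≥ 1 an integer. Suppose μ, τ are holomorphic near c₁ with μ(c) = μ₁ + M₀(c−c₁)^α + o(|c−c₁|^α) and τ(c) = K₀(c−c₁) + o(|c−c₁|), where M₀ ≠ 0. Let c_n → c₁ be a sequence with c_n − c₁ ~ d_n where d_n := z₀/(μ₁ⁿ K₀) for a fixed z₀ ≠ 0. Then as n → ∞: (i) μ(c_n)ⁿ τ'(c_n) ~ K₀ μ₁ⁿ → ∞, and (ii) n μ(c_n)^{n−1} μ'(c_n) τ(c_n)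 ~ n μ₁^{n−1} M₀ K₀ α d_n^α, which is O(n) if α = 1 and tends to 0 if α ≥ 2. -/
/-!
Since `c n - c₁ ~ d n` and `n d n → 0`, we have `μ (c n) / μ₁ = 1 + O(c n - c₁) = 1 + o(1/n)`,
hence `(μ (c n) / μ₁) ^ n → 1`. The derivatives are controlled by Cauchy's estimate on discs of
radius `|c - c₁| / 2`: a holomorphic function that is `o(|c - c₁| ^ (k + 1))` has derivative
`o(|c - c₁| ^ k)`. Applied to the remainders of `μ` and `τ` this gives
`μ' (c) ~ α M₀ (c - c₁) ^ (α - 1)` and `τ' (c) → K₀`, and multiplying the asymptotic equivalences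
yields both claims. The comparison sequence in (ii) is a constant times `n (d n) ^ (α - 1)`, which
is `n` times a constant for `α = 1` and tends to `0` for `α ≥ 2`.
-/

open Filter Asymptotics Topology Metric

section NormedField

variable {ι 𝕜 : Type*} [NormedField 𝕜] {l : Filter ι}

theorem isEquivalent_const_mul_of_isLittleO {u g : ι → 𝕜} {a : 𝕜} (ha : a ≠ 0)
    (h : (fun t => u t - a * g t) =o[l] g) : u ~[l] fun t => a * g t :=
  h.trans_isBigO (isBigO_self_const_mul ha g l)

theorem isBigO_pow_succ_sub_sub (x : 𝕜) (m : ℕ) :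
    (fun z => (z - x) ^ (m + 1)) =O[𝓝 x] fun z => z - x := by
  have h : (fun z => (z - x) ^ m) =O[𝓝 x] fun _ => (1 : 𝕜) :=
    (((continuous_sub_right x).pow m).tendsto x).isBigO_one 𝕜
  simpa [pow_succ] using h.mul (isBigO_refl (fun z => z - x) (𝓝 x))

theorem isBigO_sub_of_isLittleO_sub_pow {f : 𝕜 → 𝕜} {x a b : 𝕜} {m : ℕ}
    (h : (fun z => f z - b - a * (z - x) ^ (m + 1)) =o[𝓝 x] fun z => (z - x) ^ (m + 1)) :
    (fun z => f z - b) =O[𝓝 x] fun z => z - x :=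
  (h.isBigO.add ((isBigO_refl _ _).const_mul_left a)).trans (isBigO_pow_succ_sub_sub x m)
    |>.congr_left fun z => by ring

theorem natCast_mul_pow_sub_one_mul_pow_eventuallyEq {r z K M : 𝕜} {d : ℕ → 𝕜} (hr : r ≠ 0)
    (hK : K ≠ 0) (hd : ∀ n, d n = z / (r ^ n * K)) (m : ℕ) :
    (fun n : ℕ => (n : 𝕜) * r ^ (n - 1) * M * K * ((m + 1 : ℕ) : 𝕜) * d n ^ (m + 1)) =ᶠ[atTop]
      fun n => (m + 1) * M * z / r * (n * d n ^ m) := by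
  filter_upwards [eventually_ge_atTop 1] with n hn
  obtain ⟨k, rfl⟩ := Nat.exists_eq_add_of_le' hn
  rw [pow_succ, hd (k + 1), pow_succ]
  push_cast
  field_simp

end NormedField

section RCLike

variable {𝕜 : Type*} [RCLike 𝕜]

theorem tendsto_zero_of_tendsto_natCast_mul {u : ℕ → 𝕜}
    (h : Tendsto (fun n : ℕ => (n : 𝕜) * u n) atTop (𝓝 0)) : Tendsto u atTop (𝓝 0) := by
  have h' := h.mul (tendsto_inv_atTop_nhds_zero_nat (𝕜 := 𝕜))
  rw [mul_zero] at h'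
  refine h'.congr' ?_
  filter_upwards [eventually_ne_atTop 0] with n hn
  field_simp

theorem tendsto_of_tendsto_natCast_mul_sub {c : ℕ → 𝕜} {x : 𝕜}
    (h : Tendsto (fun n : ℕ => (n : 𝕜) * (c n - x)) atTop (𝓝 0)) : Tendsto c atTop (𝓝 x) := by
  simpa using (tendsto_zero_of_tendsto_natCast_mul h).add_const x

theorem tendsto_natCast_mul_div_pow {r : 𝕜} (hr : 1 < ‖r‖) (z : 𝕜) :
    Tendsto (fun n : ℕ => (n : 𝕜) * (z / r ^ n)) atTop (𝓝 0) := by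
  rw [tendsto_zero_iff_norm_tendsto_zero]
  simpa [mul_div_left_comm] using (tendsto_pow_const_div_const_pow_of_one_lt 1 hr).const_mul ‖z‖

end RCLike

theorem Complex.isLittleO_deriv_of_isLittleO_sub_pow_succ {E : Type*} [NormedAddCommGroup E]
    [NormedSpace ℂ E] {f : ℂ → E} {x : ℂ} {m : ℕ} (hf : ∀ᶠ z in 𝓝 x, DifferentiableAt ℂ f z)
    (ho : f =o[𝓝 x] fun z => (z - x) ^ (m + 1)) :
    deriv f =o[𝓝 x] fun z => (z - x) ^ m := by
  have hfx : HasDerivAt f 0 x := by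
    have hx : f x = 0 := ho.isBigO.eq_zero_imp.self_of_nhds (by simp)
    rw [hasDerivAt_iff_isLittleO]
    simpa [hx] using ho.trans_isBigO (isBigO_pow_succ_sub_sub x m)
  refine IsLittleO.of_bound fun ε hε => ?_
  obtain ⟨δ, hδ, hball⟩ := Metric.eventually_nhds_iff_ball.mp
    (hf.and (ho.def (by positivity : 0 < ε / 3 ^ (m + 1))))
  filter_upwards [ball_mem_nhds x (half_pos hδ)] with z hz
  rcases eq_or_ne z x with rfl | hzx
  · simp only [hfx.deriv, norm_zero]
    positivity
  -- Cauchy's estimate on the circle of radius `‖z - x‖ / 2` about `z`, which stays within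
  -- `3 ‖z - x‖ / 2` of `x`
  set r := ‖z - x‖ / 2 with hr_def
  have hr : 0 < r := by simpa [hr_def, sub_eq_zero] using hzx
  have hzx' : ‖z - x‖ < δ / 2 := by simpa [dist_eq_norm] using hz
  have hclose : ∀ w ∈ closedBall z r, ‖w - x‖ ≤ 3 * r := fun w hw => by
    have := norm_sub_le_norm_sub_add_norm_sub w z x
    rw [mem_closedBall, dist_eq_norm] at hw
    linarith
  have hsub : closedBall z r ⊆ ball x δ := fun w hw => by
    rw [mem_ball, dist_eq_norm]
    linarith [hclose w hw]
  have hbound : ∀ w ∈ sphere z r, ‖f w‖ ≤ ε / 3 ^ (m + 1) * (3 * r) ^ (m + 1) := fun w hw => by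
    refine (hball w (hsub (sphere_subset_closedBall hw))).2.trans ?_
    rw [norm_pow]
    gcongr
    exact hclose w (sphere_subset_closedBall hw)
  have hdiff : DifferentiableOn ℂ f (ball x δ) := fun w hw => (hball w hw).1.differentiableWithinAt
  calc ‖deriv f z‖ ≤ ε / 3 ^ (m + 1) * (3 * r) ^ (m + 1) / r :=
        norm_deriv_le_of_forall_mem_sphere_norm_le hr (hdiff.diffContOnCl_ball hsub) hbound
    _ = ε * r ^ m := by rw [mul_pow]; field_simp; ring
    _ ≤ ε * ‖(z - x) ^ m‖ := by
        rw [norm_pow]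
        gcongr
        linarith

theorem Complex.isEquivalent_deriv_of_isLittleO {f : ℂ → ℂ} {x a b : ℂ} {m : ℕ} (ha : a ≠ 0)
    (hf : ∀ᶠ z in 𝓝 x, DifferentiableAt ℂ f z)
    (ho : (fun z => f z - b - a * (z - x) ^ (m + 1)) =o[𝓝 x] fun z => (z - x) ^ (m + 1)) :
    deriv f ~[𝓝 x] fun z => ((m + 1) * a) * (z - x) ^ m := by
  refine isEquivalent_const_mul_of_isLittleO (mul_ne_zero (Nat.cast_add_one_ne_zero m) ha) ?_
  refine (Complex.isLittleO_deriv_of_isLittleO_sub_pow_succ ?_ ho).congr' ?_ EventuallyEq.rfl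
  · filter_upwards [hf] with z hz
    fun_prop
  · filter_upwards [hf] with z hz
    have hpow : HasDerivAt (fun w => (w - x) ^ (m + 1)) ((m + 1) * (z - x) ^ m) z := by
      simpa using (hasDerivAt_pow (m + 1) (z - x)).comp_sub_const z x
    have hg : HasDerivAt (fun w => f w - b - a * (w - x) ^ (m + 1))
        (deriv f z - a * ((m + 1) * (z - x) ^ m)) z :=
      (hz.hasDerivAt.sub_const b).sub (hpow.const_mul a)
    rw [hg.deriv]
    ring

-- `(f (c n) / b) ^ n = (1 + o(1 / n)) ^ n → exp 0`
theorem isEquivalent_comp_pow_sub {f : ℂ → ℂ} {x b : ℂ} (hb : b ≠ 0)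
    (hf : (fun z => f z - b) =O[𝓝 x] fun z => z - x) {c : ℕ → ℂ}
    (hc : Tendsto (fun n : ℕ => (n : ℂ) * (c n - x)) atTop (𝓝 0)) (k : ℕ) :
    (fun n => f (c n) ^ (n - k)) ~[atTop] fun n => b ^ (n - k) := by
  have hcx := tendsto_of_tendsto_natCast_mul_sub hc
  set g : ℕ → ℂ := fun n => f (c n) / b - 1
  have hg : Tendsto (fun n : ℕ => (n : ℂ) * g n) atTop (𝓝 0) := by
    have h := (((isBigO_refl (fun n : ℕ => (n : ℂ)) atTop).mul
      (hf.comp_tendsto hcx)).trans_tendsto hc).div_const b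
    refine (zero_div b ▸ h).congr fun n => ?_
    simp only [g, Function.comp_apply]
    field_simp
  have hpow : Tendsto (fun n => (1 + g n) ^ n) atTop (𝓝 1) := by
    simpa using Complex.tendsto_one_add_pow_exp_of_tendsto hg
  have hg1 : Tendsto (fun n => 1 + g n) atTop (𝓝 1) := by
    simpa using (tendsto_zero_of_tendsto_natCast_mul hg).const_add 1
  refine isEquivalent_of_tendsto_one ?_
  have hquot : Tendsto (fun n => (1 + g n) ^ n / (1 + g n) ^ k) atTop (𝓝 1) := by
    have h := hpow.div (hg1.pow k) (by simp)
    rwa [one_pow, div_one] at h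
  refine hquot.congr' ?_
  filter_upwards [eventually_ge_atTop k, hg1.eventually_ne one_ne_zero] with n hnk hgn
  simp only [g, add_sub_cancel, Pi.div_apply] at hgn ⊢
  rw [← div_pow, pow_sub₀ _ hgn hnk, div_eq_mul_inv]

theorem isEquivalent_pow_mul_deriv {μ τ : ℂ → ℂ} {x μ₁ K₀ : ℂ} {c : ℕ → ℂ} (hμ₁ : μ₁ ≠ 0)
    (hK : K₀ ≠ 0) (hμ : (fun z => μ z - μ₁) =O[𝓝 x] fun z => z - x)
    (hτd : ∀ᶠ z in 𝓝 x, DifferentiableAt ℂ τ z)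
    (hτ : (fun z => τ z - K₀ * (z - x)) =o[𝓝 x] fun z => z - x)
    (hc : Tendsto (fun n : ℕ => (n : ℂ) * (c n - x)) atTop (𝓝 0)) :
    (fun n => μ (c n) ^ n * deriv τ (c n)) ~[atTop] fun n => K₀ * μ₁ ^ n := by
  have hτ' := (Complex.isEquivalent_deriv_of_isLittleO (m := 0) (b := 0) hK hτd
    (by simpa using hτ)).comp_tendsto (tendsto_of_tendsto_natCast_mul_sub hc)
  have h := (isEquivalent_comp_pow_sub hμ₁ hμ hc 0).mul hτ'
  simp only [Nat.sub_zero] at h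
  exact h.congr_right (Eventually.of_forall fun n => by simp [mul_comm])

theorem isEquivalent_natCast_mul_pow_mul_deriv_mul {μ τ : ℂ → ℂ} {x μ₁ M₀ K₀ : ℂ} {m : ℕ}
    {c d : ℕ → ℂ} (hμ₁ : μ₁ ≠ 0) (hM : M₀ ≠ 0) (hK : K₀ ≠ 0)
    (hμd : ∀ᶠ z in 𝓝 x, DifferentiableAt ℂ μ z)
    (hμ : (fun z => μ z - μ₁ - M₀ * (z - x) ^ (m + 1)) =o[𝓝 x] fun z => (z - x) ^ (m + 1))
    (hτ : (fun z => τ z - K₀ * (z - x)) =o[𝓝 x] fun z => z - x)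
    (hcd : (fun n => c n - x) ~[atTop] d) (hd : Tendsto (fun n : ℕ => (n : ℂ) * d n) atTop (𝓝 0)) :
    (fun n : ℕ => (n : ℂ) * μ (c n) ^ (n - 1) * deriv μ (c n) * τ (c n)) ~[atTop]
      fun n => (n : ℂ) * μ₁ ^ (n - 1) * M₀ * K₀ * ((m + 1 : ℕ) : ℂ) * d n ^ (m + 1) := by
  have hc : Tendsto (fun n : ℕ => (n : ℂ) * (c n - x)) atTop (𝓝 0) :=
    (IsEquivalent.refl.mul hcd).symm.tendsto_nhds hd
  have hcx := tendsto_of_tendsto_natCast_mul_sub hc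
  have hμ' : (fun n => deriv μ (c n)) ~[atTop] fun n => ((m + 1) * M₀) * d n ^ m :=
    ((Complex.isEquivalent_deriv_of_isLittleO hM hμd hμ).comp_tendsto hcx).trans
      (IsEquivalent.refl.mul (hcd.pow m))
  have hτc : (fun n => τ (c n)) ~[atTop] fun n => K₀ * d n :=
    ((isEquivalent_const_mul_of_isLittleO hK hτ).comp_tendsto hcx).trans (IsEquivalent.refl.mul hcd)
  refine (((IsEquivalent.refl.mul (isEquivalent_comp_pow_sub hμ₁
    (isBigO_sub_of_isLittleO_sub_pow hμ) hc 1)).mul hμ').mul hτc).congr_right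
    (Eventually.of_forall fun n => ?_)
  simp only [Pi.mul_apply]
  push_cast
  ring

/-- Key asymptotics in the Misiurewicz case: with `μ(c) = μ₁ + M₀(c-c₁)^α + o(...)`,
`τ(c) = K₀(c-c₁) + o(...)` and `c_n - c₁ ~ d_n = z₀/(μ₁ⁿK₀)`:
(i) `μ(c_n)ⁿ τ'(c_n) ~ K₀μ₁ⁿ → ∞`, and
(ii) `n μ(c_n)^(n-1) μ'(c_n) τ(c_n) ~ n μ₁^(n-1) M₀K₀α d_nᵅ`, which is `O(n)` when
`α = 1` and tends to `0` when `α ≥ 2`. -/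
theorem stmt6 (c₁ μ₁ M₀ K₀ z₀ : ℂ) (hμ₁ : 1 < ‖μ₁‖) (hM : M₀ ≠ 0)
    (hK : K₀ ≠ 0) (hz₀ : z₀ ≠ 0) (α : ℕ) (hα : 1 ≤ α) (ρ : ℝ) (hρ : 0 < ρ)
    (μ τ : ℂ → ℂ)
    (hμa : AnalyticOnNhd ℂ μ (Metric.ball c₁ ρ))
    (hτa : AnalyticOnNhd ℂ τ (Metric.ball c₁ ρ))
    (hμe : (fun c => μ c - μ₁ - M₀ * (c - c₁) ^ α) =o[nhds c₁] (fun c => (c - c₁) ^ α))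
    (hτe : (fun c => τ c - K₀ * (c - c₁)) =o[nhds c₁] (fun c => c - c₁))
    (c d : ℕ → ℂ) (hd : ∀ n, d n = z₀ / (μ₁ ^ n * K₀))
    (hc : Filter.Tendsto (fun n => (c n - c₁) / d n) Filter.atTop (nhds 1)) :
    (Filter.Tendsto (fun n => μ (c n) ^ n * deriv τ (c n) / (K₀ * μ₁ ^ n))
        Filter.atTop (nhds 1) ∧
      Filter.Tendsto (fun n => ‖μ (c n) ^ n * deriv τ (c n)‖)
        Filter.atTop Filter.atTop) ∧
    (Filter.Tendsto (fun n : ℕ => ((n : ℂ) * μ (c n) ^ (n - 1) * deriv μ (c n) * τ (c n)) /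
          ((n : ℂ) * μ₁ ^ (n - 1) * M₀ * K₀ * (α : ℂ) * d n ^ α))
        Filter.atTop (nhds 1) ∧
      (α = 1 → (fun n : ℕ => (n : ℂ) * μ (c n) ^ (n - 1) * deriv μ (c n) * τ (c n))
          =O[Filter.atTop] (fun n => (n : ℝ))) ∧
      (2 ≤ α → Filter.Tendsto (fun n : ℕ => (n : ℂ) * μ (c n) ^ (n - 1) * deriv μ (c n) * τ (c n))
          Filter.atTop (nhds 0))) := by
  obtain ⟨m, rfl⟩ : ∃ m, α = m + 1 := ⟨α - 1, by omega⟩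
  have hμ₁0 : μ₁ ≠ 0 := norm_pos_iff.mp (one_pos.trans hμ₁)
  have hnd : Tendsto (fun n : ℕ => (n : ℂ) * d n) atTop (𝓝 0) := by
    simpa [hd, div_mul_eq_div_div_swap] using tendsto_natCast_mul_div_pow hμ₁ (z₀ / K₀)
  have hcd : (fun n => c n - c₁) ~[atTop] d := isEquivalent_of_tendsto_one hc
  have hμd : ∀ᶠ z in 𝓝 c₁, DifferentiableAt ℂ μ z :=
    (hμa c₁ (mem_ball_self hρ)).eventually_analyticAt.mono fun _ hz => hz.differentiableAt
  have hτd : ∀ᶠ z in 𝓝 c₁, DifferentiableAt ℂ τ z :=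
    (hτa c₁ (mem_ball_self hρ)).eventually_analyticAt.mono fun _ hz => hz.differentiableAt
  have hi := isEquivalent_pow_mul_deriv hμ₁0 hK (isBigO_sub_of_isLittleO_sub_pow hμe) hτd hτe
    ((IsEquivalent.refl.mul hcd).symm.tendsto_nhds hnd)
  have hii := isEquivalent_natCast_mul_pow_mul_deriv_mul hμ₁0 hM hK hμd hμe hτe hcd hnd
  have hV := natCast_mul_pow_sub_one_mul_pow_eventuallyEq (M := M₀) hμ₁0 hK hd m
  refine ⟨⟨(isEquivalent_iff_tendsto_one (Eventually.of_forall fun n =>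
      mul_ne_zero hK (pow_ne_zero n hμ₁0))).mp hi, ?_⟩, (isEquivalent_iff_tendsto_one ?_).mp hii,
      fun hm => ?_, fun hm => ?_⟩
  · refine hi.isTheta.tendsto_norm_atTop_iff.mpr ?_
    simpa [Function.comp_def] using
      (tendsto_pow_atTop_atTop_of_one_lt hμ₁).const_mul_atTop (norm_pos_iff.mpr hK)
  · filter_upwards [hV, eventually_ne_atTop 0] with n hn hn0
    rw [hn]
    exact mul_ne_zero (by simp [hM, hz₀, hμ₁0, Nat.cast_add_one_ne_zero])
      (mul_ne_zero (Nat.cast_ne_zero.mpr hn0) (pow_ne_zero m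
        (hd n ▸ div_ne_zero hz₀ (mul_ne_zero (pow_ne_zero n hμ₁0) hK))))
  · obtain rfl : m = 0 := by omega
    refine (hii.congr_right hV).isBigO.trans ?_
    simpa using (isBigO_of_le atTop fun n : ℕ => by simp).const_mul_left (M₀ * z₀ / μ₁)
  · obtain ⟨k, rfl⟩ : ∃ k, m = k + 1 := ⟨m - 1, by omega⟩
    refine (hii.congr_right hV).symm.tendsto_nhds ?_
    simpa [pow_succ', mul_assoc, mul_left_comm] using
      (hnd.mul ((tendsto_zero_of_tendsto_natCast_mul hnd).pow k)).const_mul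
        ((k + 1 + 1 : ℂ) * M₀ * z₀ / μ₁)
end

section
/- Let g : D(w₀, R/2) → ℂ be a univalent branch of the inverse of f_c(z) = z² + c + u(z), where |c| + |u| ≤ r + δ on the relevant domain and |w₀| = R with R > 8 > 2(r+δ). Then for w ∈ D(w₀, R/2) one can write log g(w) = (1/2) log w + Υ(w) where Υ(w) = (1/2) log(1 − (c + u(g(w)))/w) satisfies |Υ(w)| ≤ C/R for a constant C depending only on r + δ (for suitable branches of logarithm), and consequently by the Schwarz lemma |Υ'(w)| ≤ C'/R² on the circle |w| = R. -/
/-!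
On `D(w₀, R/2)` we have `|w| ≥ R/2`, so `x = (c + u(g w))/w` satisfies
`|x| ≤ 2(r+δ)/R < (r+δ)/4 < 1`. Hence the principal branch of `log(1 - x)` is defined, is
`O(|x|) = O(1/R)`, and `w · exp(log(1 - x)) = w - c - u(g w) = g(w)²`. The map `u` need not be
holomorphic, but on the disc `c + u(g w) = w - g(w)²`, so `Υ(w) = ½ log(1 - x)` is holomorphic
there, and the Cauchy estimate on the disc of radius `R/4` about any point of `D(w₀, R/4)` turns
`|Υ| ≤ C/R` into `|Υ'| ≤ 4C/R²`.
-/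

open Complex Metric

lemma half_norm_le_norm_of_mem_ball {E : Type*} [SeminormedAddCommGroup E] {w₀ w : E}
    (hw : w ∈ ball w₀ (‖w₀‖ / 2)) : ‖w₀‖ / 2 ≤ ‖w‖ := by
  rw [mem_ball, dist_eq_norm'] at hw
  linarith [norm_sub_norm_le w₀ w]

lemma norm_deriv_le_of_closedBall_subset {F : Type*} [NormedAddCommGroup F] [NormedSpace ℂ F]
    {f : ℂ → F} {U : Set ℂ} {w : ℂ} {ρ B : ℝ} (hf : DifferentiableOn ℂ f U)
    (hB : ∀ z ∈ U, ‖f z‖ ≤ B) (hρ : 0 < ρ) (hU : closedBall w ρ ⊆ U) :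
    ‖deriv f w‖ ≤ B / ρ :=
  norm_deriv_le_of_forall_mem_sphere_norm_le hρ (hf.diffContOnCl_ball hU) fun z hz =>
    hB z (hU (sphere_subset_closedBall hz))

namespace Complex

lemma norm_log_one_sub_le {x : ℂ} {a : ℝ} (ha : a < 1) (hx : ‖x‖ ≤ a) :
    ‖log (1 - x)‖ ≤ ‖x‖ / (1 - a) := by
  have h1a : 0 < 1 - a := by linarith
  have hlog := norm_log_one_add_le (z := -x) (by rw [norm_neg]; linarith)
  rw [norm_neg, ← sub_eq_add_neg] at hlog
  have hinv : (1 - ‖x‖)⁻¹ ≤ (1 - a)⁻¹ := inv_anti₀ h1a (by linarith)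
  calc ‖log (1 - x)‖ ≤ ‖x‖ ^ 2 * (1 - ‖x‖)⁻¹ / 2 + ‖x‖ := hlog
    _ ≤ ‖x‖ ^ 2 * (1 - a)⁻¹ / 2 + ‖x‖ := by gcongr
    _ ≤ ‖x‖ / (1 - a) := by
      rw [div_add' _ _ _ two_ne_zero, div_le_div_iff₀ two_pos h1a, ← div_eq_mul_inv]
      field_simp
      nlinarith [norm_nonneg x]

lemma mul_exp_log_one_sub_div {z w : ℂ} (hw : w ≠ 0) (hzw : z ≠ w) :
    w * exp (log (1 - z / w)) = w - z := by
  have hne : 1 - z / w ≠ 0 := by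
    rw [sub_ne_zero, ne_eq, eq_comm, div_eq_one_iff_eq hw]
    exact hzw
  rw [exp_log hne]
  field_simp

end Complex

section InverseBranch

variable {s : ℝ} {w₀ w z : ℂ}

lemma norm_div_le_of_mem_ball (hR : 0 < ‖w₀‖) (hw : w ∈ ball w₀ (‖w₀‖ / 2)) (hz : ‖z‖ ≤ s) :
    ‖z / w‖ ≤ 2 * s / ‖w₀‖ := by
  have hw' := half_norm_le_norm_of_mem_ball hw
  rw [norm_div]
  calc ‖z‖ / ‖w‖ ≤ s / (‖w₀‖ / 2) := div_le_div₀ ((norm_nonneg z).trans hz) hz (by positivity) hw'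
    _ = 2 * s / ‖w₀‖ := by field_simp

lemma norm_div_le_quarter_of_mem_ball (hR : 8 < ‖w₀‖) (hw : w ∈ ball w₀ (‖w₀‖ / 2))
    (hz : ‖z‖ ≤ s) : ‖z / w‖ ≤ s / 4 := by
  have hs : 0 ≤ s := (norm_nonneg z).trans hz
  refine (norm_div_le_of_mem_ball (by linarith) hw hz).trans ?_
  rw [div_le_div_iff₀ (by linarith) (by norm_num)]
  nlinarith

lemma norm_half_log_one_sub_div_le (hs : s < 4) (hR : 8 < ‖w₀‖) (hw : w ∈ ball w₀ (‖w₀‖ / 2))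
    (hz : ‖z‖ ≤ s) : ‖(1 / 2 : ℂ) * log (1 - z / w)‖ ≤ s / (1 - s / 4) / ‖w₀‖ := by
  have hlog := norm_log_one_sub_le (by linarith) (norm_div_le_quarter_of_mem_ball hR hw hz)
  have hs4 : 0 < 1 - s / 4 := by linarith
  rw [norm_mul, norm_div, norm_one, Complex.norm_two]
  calc 1 / 2 * ‖log (1 - z / w)‖ ≤ 1 / 2 * (‖z / w‖ / (1 - s / 4)) := by gcongr
    _ ≤ 1 / 2 * (2 * s / ‖w₀‖ / (1 - s / 4)) := by
      gcongr
      exact norm_div_le_of_mem_ball (by linarith) hw hz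
    _ = s / (1 - s / 4) / ‖w₀‖ := by ring

lemma mul_exp_two_mul_half_log_one_sub_div (hs : s < 4) (hR : 8 < ‖w₀‖)
    (hw : w ∈ ball w₀ (‖w₀‖ / 2)) (hz : ‖z‖ ≤ s) :
    w * exp (2 * ((1 / 2 : ℂ) * log (1 - z / w))) = w - z := by
  have hw0 : w ≠ 0 := norm_pos_iff.mp (by linarith [half_norm_le_norm_of_mem_ball hw])
  have hzw : z ≠ w := by
    intro h
    have hquarter := norm_div_le_quarter_of_mem_ball hR hw hz
    rw [h, div_self hw0, norm_one] at hquarter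
    linarith
  rw [← mul_assoc, show (2 : ℂ) * (1 / 2) = 1 by norm_num, one_mul]
  exact mul_exp_log_one_sub_div hw0 hzw

lemma differentiableOn_half_log_one_sub_div {g p : ℂ → ℂ} (hs : s < 4) (hR : 8 < ‖w₀‖)
    (hg : DifferentiableOn ℂ g (ball w₀ (‖w₀‖ / 2))) (hp : ∀ w, ‖p w‖ ≤ s)
    (hgp : ∀ w ∈ ball w₀ (‖w₀‖ / 2), g w ^ 2 + p w = w) :
    DifferentiableOn ℂ (fun w => (1 / 2 : ℂ) * log (1 - p w / w)) (ball w₀ (‖w₀‖ / 2)) := by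
  have hp_eq : ∀ w ∈ ball w₀ (‖w₀‖ / 2), p w = w - g w ^ 2 := fun w hw =>
    eq_sub_of_add_eq' (hgp w hw)
  have hholo : DifferentiableOn ℂ (fun w => (1 / 2 : ℂ) * log (1 - (w - g w ^ 2) / w))
      (ball w₀ (‖w₀‖ / 2)) := by
    intro w hw
    have hw0 : w ≠ 0 := norm_pos_iff.mp (by linarith [half_norm_le_norm_of_mem_ball hw])
    have hslit : 1 - (w - g w ^ 2) / w ∈ slitPlane := by
      rw [sub_eq_add_neg, ← hp_eq w hw]
      refine mem_slitPlane_of_norm_lt_one ?_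
      rw [norm_neg]
      linarith [norm_div_le_quarter_of_mem_ball hR hw (hp w)]
    exact ((((differentiableWithinAt_id.sub ((hg w hw).pow 2)).div differentiableWithinAt_id
      hw0).const_sub 1).clog hslit).const_mul _
  exact hholo.congr fun w hw => by rw [hp_eq w hw]

end InverseBranch

/-- For a univalent inverse branch `g` of `f_c(z) = z² + c + u(z)` on `D(w₀, R/2)`
with `|w₀| = R`, `R > 8 > 2(r+δ)`, one has `g(w)² = w·exp(2Υ(w))` with
`Υ(w) = (1/2)log(1 - (c+u(g(w)))/w)` satisfying `|Υ(w)| ≤ C/R` for a constant `C`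
depending only on `r + δ`, and `|Υ'(w)| ≤ C'/R²` by the Schwarz lemma. -/
theorem stmt10 (r δ : ℝ) (hr : 0 < r) (hδ : 0 < δ) (hrδ : 2 * (r + δ) < 8) :
    ∃ C > 0, ∃ C' > 0, ∀ R : ℝ, 8 < R → ∀ (w₀ c : ℂ) (u g : ℂ → ℂ),
      ‖w₀‖ = R → ‖c‖ ≤ r →
      (∀ z : ℂ, ‖u z‖ ≤ δ) →
      AnalyticOnNhd ℂ g (Metric.ball w₀ (R / 2)) →
      Set.InjOn g (Metric.ball w₀ (R / 2)) →
      (∀ w ∈ Metric.ball w₀ (R / 2), (g w) ^ 2 + c + u (g w) = w) →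
      (∀ w ∈ Metric.ball w₀ (R / 2),
          ‖(1 / 2 : ℂ) * Complex.log (1 - (c + u (g w)) / w)‖ ≤ C / R ∧
          (g w) ^ 2 = w * Complex.exp (2 * ((1 / 2 : ℂ) * Complex.log (1 - (c + u (g w)) / w)))) ∧
      (∀ w ∈ Metric.ball w₀ (R / 4),
          ‖deriv (fun w' => (1 / 2 : ℂ) * Complex.log (1 - (c + u (g w')) / w')) w‖
            ≤ C' / R ^ 2) := by
  have hs : r + δ < 4 := by linarith
  have hC : 0 < (r + δ) / (1 - (r + δ) / 4) := div_pos (by positivity) (by linarith)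
  refine ⟨_, hC, 4 * ((r + δ) / (1 - (r + δ) / 4)), by positivity, ?_⟩
  rintro R hR w₀ c u g rfl hc hu hg - hgu
  have hp : ∀ w, ‖c + u (g w)‖ ≤ r + δ := fun w => (norm_add_le _ _).trans (add_le_add hc (hu _))
  have hgp : ∀ w ∈ ball w₀ (‖w₀‖ / 2), g w ^ 2 + (c + u (g w)) = w := fun w hw => by
    rw [← add_assoc, hgu w hw]
  have hbound := fun w (hw : w ∈ ball w₀ (‖w₀‖ / 2)) =>
    norm_half_log_one_sub_div_le hs hR hw (hp w)
  refine ⟨fun w hw => ⟨hbound w hw, ?_⟩, fun w hw => ?_⟩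
  · rw [mul_exp_two_mul_half_log_one_sub_div hs hR hw (hp w)]
    linear_combination hgu w hw
  · have hsub : closedBall w (‖w₀‖ / 4) ⊆ ball w₀ (‖w₀‖ / 2) :=
      closedBall_subset_ball' (by rw [mem_ball] at hw; linarith)
    calc _ ≤ (r + δ) / (1 - (r + δ) / 4) / ‖w₀‖ / (‖w₀‖ / 4) :=
          norm_deriv_le_of_closedBall_subset
            (differentiableOn_half_log_one_sub_div hs hR hg.differentiableOn hp hgp) hbound
            (by linarith) hsub
      _ = _ := by field_simp
end

section
/- Let c₁ ∈ ℂ, B₀ ≠ 0, ν ≥ 2 an integer, and let h be a bounded holomorphic function on a punctured neighborhood of c₁. Define c(n) := 2πi/(ν² B₀ n) and r_n := |c(n)|^{1+β} for fixed β ∈ (0,1). Then for all sufficiently large n, on the circle |c − (c₁ + c(n))| = r_n one has |−2πi/(ν² B₀ (c − c₁)) + n| ≥ C' n^{1−β} for some C' > 0, and in particular the equation −2πi/(ν² B₀ (c − c₁)) + n + h(c) = 0 has exactly one solution in the disk D(c₁ + c(n), r_n), by Rouché's theorem. -/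
/-!
Rouché's theorem is replaced by a contraction argument. With `a = c(n)` we have
`2πi/(ν²B₀) = n a`, so the main term is `n (c - c₁ - a)/(c - c₁)`, of modulus about
`n r_n / |a| ≍ n^(1-β)` on the circle `|c - (c₁ + a)| = r_n = |a| |a|^β`. The equation is the
fixed-point problem `c = c₁ + n a/(n + h c)`. On `D(c₁ + a, r_n)` this map moves points by
`O(|a|/n) = o(r_n)`, and since the Cauchy estimate makes `h` Lipschitz with constant `O(1/|a|)`
there, it is a contraction with constant `O(1/n)`: Banach's fixed point theorem gives exactly one
solution.
-/

open Filter Metric Set Function Topology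

theorem existsUnique_mem_ball_isFixedPt {α : Type*} [MetricSpace α] [CompleteSpace α]
    {g : α → α} {x : α} {r : ℝ} {K : NNReal} (hr : 0 ≤ r) (hK : K < 1)
    (hmaps : MapsTo g (closedBall x r) (ball x r)) (hg : LipschitzOnWith K g (closedBall x r)) :
    ∃! z, z ∈ ball x r ∧ IsFixedPt g z := by
  have hself : MapsTo g (closedBall x r) (closedBall x r) :=
    hmaps.mono_right ball_subset_closedBall
  obtain ⟨z, hz, hfix, -⟩ := ContractingWith.exists_fixedPoint' isClosed_closedBall.isComplete
    hself ⟨hK, hg.mapsToRestrict hself⟩ (mem_closedBall_self hr) (edist_ne_top _ _)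
  refine ⟨z, ⟨hfix ▸ hmaps hz, hfix⟩, fun w ⟨hw, hwfix⟩ => dist_le_zero.1 ?_⟩
  have := hg.dist_le_mul w (ball_subset_closedBall hw) z hz
  rw [hwfix.eq, hfix.eq] at this
  have hK' : (K : ℝ) < 1 := hK
  nlinarith [dist_nonneg (x := w) (y := z)]

theorem dist_le_mul_dist_of_norm_le_on_ball {E : Type*} [NormedAddCommGroup E] [NormedSpace ℂ E]
    {f : ℂ → E} {c : ℂ} {R C : ℝ} (hd : DifferentiableOn ℂ f (ball c R))
    (hC : ∀ z ∈ ball c R, ‖f z‖ ≤ C) {z w : ℂ} (hz : z ∈ ball c (R / 4))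
    (hw : w ∈ ball c (R / 4)) :
    dist (f w) (f z) ≤ 4 * C / R * dist w z := by
  have hR : 0 < R := by have := (nonempty_ball.1 ⟨z, hz⟩); linarith
  have hsub : ball z (R / 2) ⊆ ball c R := ball_subset_ball' (by rw [mem_ball] at hz; linarith)
  have hmaps : MapsTo f (ball z (R / 2)) (closedBall (f z) (2 * C)) := fun y hy => by
    rw [mem_closedBall, dist_eq_norm]
    linarith [norm_sub_le (f y) (f z), hC y (hsub hy), hC z (hsub (mem_ball_self (by linarith)))]
  have hwz : w ∈ ball z (R / 2) := by
    rw [mem_ball] at hz hw ⊢; linarith [dist_triangle_right w z c]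
  calc dist (f w) (f z) ≤ 2 * C / (R / 2) * dist w z :=
        Complex.dist_le_div_mul_dist_of_mapsTo_ball (hd.mono hsub) hmaps hwz
    _ = 4 * C / R * dist w z := by field_simp; ring

theorem ball_add_half_norm_subset_ball_diff {E : Type*} [SeminormedAddCommGroup E]
    {p a : E} {ρ : ℝ} (hρ : 3 * ‖a‖ / 2 ≤ ρ) : ball (p + a) (‖a‖ / 2) ⊆ ball p ρ \ {p} := by
  intro z hz
  rw [mem_ball] at hz
  have hpa : dist (p + a) p = ‖a‖ := by simp [dist_eq_norm]
  refine ⟨?_, fun hzp => ?_⟩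
  · rw [mem_ball]; linarith [dist_triangle z (p + a) p]
  · rw [mem_singleton_iff.1 hzp, dist_comm] at hz; linarith [norm_nonneg a]

section Mobius

variable {𝕜 : Type*} [NormedField 𝕜] {N a u v : 𝕜}

theorem norm_half_le_norm_add (hu : 2 * ‖u‖ ≤ ‖N‖) : ‖N‖ / 2 ≤ ‖N + u‖ := by
  have := norm_sub_norm_le N (-u)
  rw [norm_neg, sub_neg_eq_add] at this
  linarith

theorem neg_mul_div_sub_add_add_eq_zero_iff {p z : 𝕜} (hz : z ≠ p) (hu : N + u ≠ 0) :
    -(N * a) / (z - p) + N + u = 0 ↔ p + N * a / (N + u) = z := by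
  have hzp : z - p ≠ 0 := sub_ne_zero.2 hz
  rw [show -(N * a) / (z - p) + N + u = ((N + u) * (z - p) - N * a) / (z - p) by
      field_simp; ring, div_eq_zero_iff, or_iff_left hzp, ← eq_sub_iff_add_eq', div_eq_iff hu]
  constructor <;> intro h <;> linear_combination -h

theorem norm_mul_div_add_sub_le (hN : N ≠ 0) (hu : 2 * ‖u‖ ≤ ‖N‖) :
    ‖N * a / (N + u) - a‖ ≤ 2 * ‖a‖ * ‖u‖ / ‖N‖ := by
  have hNu := norm_half_le_norm_add hu
  have hN0 : 0 < ‖N‖ := norm_pos_iff.2 hN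
  have hne : N + u ≠ 0 := norm_pos_iff.1 (by linarith)
  rw [show N * a / (N + u) - a = -(a * u) / (N + u) by field_simp; ring, norm_div, norm_neg,
    norm_mul, div_le_div_iff₀ (by linarith) hN0]
  nlinarith [mul_nonneg (norm_nonneg a) (norm_nonneg u)]

theorem norm_mul_div_add_sub_mul_div_add_le (hN : N ≠ 0) (hu : 2 * ‖u‖ ≤ ‖N‖)
    (hv : 2 * ‖v‖ ≤ ‖N‖) :
    ‖N * a / (N + u) - N * a / (N + v)‖ ≤ 4 * ‖a‖ * ‖u - v‖ / ‖N‖ := by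
  have hNu := norm_half_le_norm_add hu
  have hNv := norm_half_le_norm_add hv
  have hN0 : 0 < ‖N‖ := norm_pos_iff.2 hN
  have hune : N + u ≠ 0 := norm_pos_iff.1 (by linarith)
  have hvne : N + v ≠ 0 := norm_pos_iff.1 (by linarith)
  rw [show N * a / (N + u) - N * a / (N + v) = N * a * (v - u) / ((N + u) * (N + v)) by
      field_simp; ring, norm_div, norm_mul, norm_mul, norm_mul, norm_sub_rev,
    div_le_div_iff₀ (mul_pos (norm_pos_iff.2 hune) (norm_pos_iff.2 hvne)) hN0]
  have hprod : ‖N‖ / 2 * (‖N‖ / 2) ≤ ‖N + u‖ * ‖N + v‖ :=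
    mul_le_mul hNu hNv (by positivity) (norm_nonneg _)
  have := mul_nonneg (norm_nonneg a) (norm_nonneg (u - v))
  nlinarith [mul_le_mul_of_nonneg_left hprod (mul_nonneg this hN0.le)]

theorem le_norm_neg_mul_div_sub_add {p z : 𝕜} {δ : ℝ} (ha : a ≠ 0) (hδ : δ < 1)
    (hz : ‖z - (p + a)‖ = ‖a‖ * δ) : ‖N‖ * δ / 2 ≤ ‖-(N * a) / (z - p) + N‖ := by
  have ha0 : 0 < ‖a‖ := norm_pos_iff.2 ha
  have hδ0 : 0 ≤ δ := nonneg_of_mul_nonneg_right (hz ▸ norm_nonneg _) ha0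
  have hzp : z - p ≠ 0 := fun hzp => by
    rw [show z - (p + a) = z - p - a by abel, hzp, zero_sub, norm_neg] at hz
    nlinarith
  have hle : ‖z - p‖ ≤ 2 * ‖a‖ := by
    have := norm_sub_le_norm_sub_add_norm_sub z (p + a) p
    rw [add_sub_cancel_left, hz] at this
    nlinarith
  rw [show -(N * a) / (z - p) + N = N * (z - (p + a)) / (z - p) by field_simp; ring, norm_div,
    norm_mul, hz]
  calc ‖N‖ * δ / 2 = ‖N‖ * (‖a‖ * δ) / (2 * ‖a‖) := by field_simp
    _ ≤ ‖N‖ * (‖a‖ * δ) / ‖z - p‖ :=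
      div_le_div_of_nonneg_left (by positivity) (norm_pos_iff.2 hzp) hle

end Mobius

theorem existsUnique_mem_ball_neg_mul_div_sub_add_add_eq_zero {p a : ℂ} {N C δ : ℝ}
    {h : ℂ → ℂ} (ha : a ≠ 0) (hd : DifferentiableOn ℂ h (ball (p + a) (‖a‖ / 2)))
    (hb : ∀ z ∈ ball (p + a) (‖a‖ / 2), ‖h z‖ ≤ C) (hδ : δ < 1 / 8)
    (hN : 64 * C ≤ N) (hNδ : 2 * C < N * δ) :
    ∃! z, z ∈ ball (p + a) (‖a‖ * δ) ∧ -(N * a) / (z - p) + N + h z = 0 := by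
  have ha0 : 0 < ‖a‖ := norm_pos_iff.2 ha
  have hC : 0 ≤ C := (norm_nonneg _).trans (hb _ (mem_ball_self (by positivity)))
  have hN0 : 0 < N := by nlinarith
  have hδ0 : 0 < δ := pos_of_mul_pos_right (by linarith) hN0.le
  have hNC : ‖(N : ℂ)‖ = N := by simp [abs_of_pos hN0]
  have hN0' : (N : ℂ) ≠ 0 := by exact_mod_cast hN0.ne'
  set s := closedBall (p + a) (‖a‖ * δ)
  have hsub : s ⊆ ball (p + a) (‖a‖ / 2 / 4) := closedBall_subset_ball (by nlinarith)
  have hbs : ∀ z ∈ s, ‖h z‖ ≤ C := fun z hz =>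
    hb z (ball_subset_ball (by linarith) (hsub hz))
  have hbs2 : ∀ z ∈ s, 2 * ‖h z‖ ≤ ‖(N : ℂ)‖ := fun z hz => by
    rw [hNC]; linarith [hbs z hz]
  set g : ℂ → ℂ := fun z => p + N * a / (N + h z)
  have hmaps : MapsTo g s (ball (p + a) (‖a‖ * δ)) := by
    intro z hz
    rw [mem_ball, dist_eq_norm, add_sub_add_left_eq_sub]
    calc ‖N * a / (N + h z) - a‖ ≤ 2 * ‖a‖ * ‖h z‖ / ‖(N : ℂ)‖ :=
          norm_mul_div_add_sub_le hN0' (hbs2 z hz)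
      _ ≤ 2 * ‖a‖ * C / N := by rw [hNC]; gcongr; exact hbs z hz
      _ < ‖a‖ * δ := by rw [div_lt_iff₀ hN0]; nlinarith
  have hlip : LipschitzOnWith (1 / 2) g s := by
    refine LipschitzOnWith.of_dist_le_mul fun z hz w hw => ?_
    rw [dist_eq_norm, add_sub_add_left_eq_sub]
    calc ‖N * a / (N + h z) - N * a / (N + h w)‖
          ≤ 4 * ‖a‖ * ‖h z - h w‖ / ‖(N : ℂ)‖ :=
          norm_mul_div_add_sub_mul_div_add_le hN0' (hbs2 z hz) (hbs2 w hw)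
      _ ≤ 4 * ‖a‖ * (4 * C / (‖a‖ / 2) * dist z w) / N := by
          rw [hNC, ← dist_eq_norm]
          gcongr
          exact dist_le_mul_dist_of_norm_le_on_ball hd hb (hsub hw) (hsub hz)
      _ = 32 * C / N * dist z w := by field_simp; ring
      _ ≤ ((1 / 2 : NNReal) : ℝ) * dist z w := by
          gcongr
          rw [div_le_iff₀ hN0]
          push_cast
          linarith
  have hroot : ∀ z ∈ s, -(N * a) / (z - p) + N + h z = 0 ↔ IsFixedPt g z := fun z hz =>
    neg_mul_div_sub_add_add_eq_zero_iff
      (ball_add_half_norm_subset_ball_diff le_rfl (ball_subset_ball (by linarith) (hsub hz))).2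
      (norm_pos_iff.1 (by linarith [norm_half_le_norm_add (hbs2 z hz), norm_pos_iff.2 hN0']))
  obtain ⟨z, ⟨hz, hfix⟩, huniq⟩ :=
    existsUnique_mem_ball_isFixedPt (by positivity) (by norm_num) hmaps hlip
  exact ⟨z, ⟨hz, (hroot z (ball_subset_closedBall hz)).2 hfix⟩,
    fun w ⟨hw, hw0⟩ => huniq w ⟨hw, (hroot w (ball_subset_closedBall hw)).1 hw0⟩⟩

theorem mul_div_rpow_eq {x k : ℝ} (β : ℝ) (hx : 0 < x) (hk : 0 ≤ k) :
    x * (k / x) ^ β = k ^ β * x ^ (1 - β) := by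
  rw [Real.div_rpow hk hx.le, Real.rpow_sub hx, Real.rpow_one]
  field_simp

theorem tendsto_div_natCast_rpow_nhds_zero (k : ℝ) {β : ℝ} (hβ : 0 < β) :
    Tendsto (fun n : ℕ => (k / n) ^ β) atTop (𝓝 0) := by
  simpa [Real.zero_rpow hβ.ne'] using
    (tendsto_const_div_atTop_nhds_zero_nat k).rpow_const (Or.inr hβ.le)

theorem tendsto_natCast_mul_div_natCast_rpow_atTop {k β : ℝ} (hk : 0 < k) (hβ : β < 1) :
    Tendsto (fun n : ℕ => n * (k / n) ^ β) atTop atTop :=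
  (((tendsto_rpow_atTop (by linarith)).comp tendsto_natCast_atTop_atTop).const_mul_atTop
    (by positivity)).congr' <| (eventually_ne_atTop 0).mono fun n hn =>
      (mul_div_rpow_eq β (Nat.cast_pos.2 (Nat.pos_of_ne_zero hn)) hk.le).symm

theorem eventually_le_norm_and_existsUnique_root {κ c₁ : ℂ} (hκ : κ ≠ 0) {β ρ C : ℝ}
    (hβ0 : 0 < β) (hβ1 : β < 1) (hρ : 0 < ρ) {h : ℂ → ℂ}
    (hd : DifferentiableOn ℂ h (ball c₁ ρ \ {c₁})) (hb : ∀ c ∈ ball c₁ ρ \ {c₁}, ‖h c‖ ≤ C) :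
    ∀ᶠ n : ℕ in atTop,
      (∀ c, ‖c - (c₁ + κ / n)‖ = ‖κ / n‖ ^ (1 + β) →
        ‖κ‖ ^ β / 2 * (n : ℝ) ^ (1 - β) ≤ ‖-κ / (c - c₁) + n‖) ∧
      ∃! c, c ∈ ball (c₁ + κ / n) (‖κ / n‖ ^ (1 + β)) ∧ -κ / (c - c₁) + n + h c = 0 := by
  have hnorm : ∀ n : ℕ, ‖κ / n‖ = ‖κ‖ / n := fun n => by rw [norm_div, Complex.norm_natCast]
  filter_upwards [eventually_ne_atTop 0,
    (tendsto_const_div_atTop_nhds_zero_nat ‖κ‖).eventually_lt_const (by positivity : 0 < 2 * ρ / 3),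
    (tendsto_div_natCast_rpow_nhds_zero ‖κ‖ hβ0).eventually_lt_const
      (by norm_num : (0 : ℝ) < 1 / 8),
    tendsto_natCast_atTop_atTop.eventually_ge_atTop (64 * C),
    (tendsto_natCast_mul_div_natCast_rpow_atTop (norm_pos_iff.2 hκ) hβ1).eventually_gt_atTop
      (2 * C)]
    with n hn hε hδ hN hNδ
  rw [← hnorm] at hε hδ hNδ
  have ha : κ / n ≠ 0 := div_ne_zero hκ (Nat.cast_ne_zero.2 hn)
  have hκn : (n : ℂ) * (κ / n) = κ := mul_div_cancel₀ κ (Nat.cast_ne_zero.2 hn)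
  simp_rw [Real.rpow_add' (norm_nonneg _) (by linarith : 1 + β ≠ 0), Real.rpow_one]
  refine ⟨fun c hc => ?_, ?_⟩
  · calc ‖κ‖ ^ β / 2 * (n : ℝ) ^ (1 - β) = ‖(n : ℂ)‖ * ‖κ / n‖ ^ β / 2 := by
          rw [Complex.norm_natCast, hnorm,
            mul_div_rpow_eq β (Nat.cast_pos.2 (Nat.pos_of_ne_zero hn)) (norm_nonneg κ)]
          ring
      _ ≤ _ := by simpa only [hκn] using
            le_norm_neg_mul_div_sub_add (N := (n : ℂ)) ha (hδ.trans (by norm_num)) hc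
  · have hU := ball_add_half_norm_subset_ball_diff (p := c₁) (a := κ / n) (ρ := ρ) (by linarith)
    simpa [hκn] using existsUnique_mem_ball_neg_mul_div_sub_add_add_eq_zero (N := n) ha
      (hd.mono hU) (fun z hz => hb z (hU hz)) hδ hN hNδ

theorem stmt14_general (c₁ B₀ : ℂ) (hB : B₀ ≠ 0) (ν : ℕ) (hν : 2 ≤ ν)
    (β : ℝ) (hβ : β ∈ Set.Ioo 0 1) (ρ C : ℝ) (hρ : 0 < ρ)
    (h : ℂ → ℂ)
    (hha : AnalyticOnNhd ℂ h (Metric.ball c₁ ρ \ {c₁}))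
    (hhb : ∀ c ∈ Metric.ball c₁ ρ \ {c₁}, ‖h c‖ ≤ C)
    (cn : ℕ → ℂ)
    (hcn : ∀ n : ℕ, cn n = 2 * Real.pi * Complex.I / ((ν : ℂ) ^ 2 * B₀ * n))
    (rn : ℕ → ℝ) (hrn : ∀ n : ℕ, rn n = ‖cn n‖ ^ ((1:ℝ) + β)) :
    ∃ C' > 0, ∀ᶠ n in Filter.atTop,
      (∀ c : ℂ, ‖c - (c₁ + cn n)‖ = rn n →
        C' * (n : ℝ) ^ ((1:ℝ) - β)
          ≤ ‖-(2 * Real.pi * Complex.I) / ((ν : ℂ) ^ 2 * B₀ * (c - c₁)) + n‖) ∧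
      (∃! c : ℂ, c ∈ Metric.ball (c₁ + cn n) (rn n) ∧
        -(2 * Real.pi * Complex.I) / ((ν : ℂ) ^ 2 * B₀ * (c - c₁)) + n + h c = 0) := by
  set κ : ℂ := 2 * Real.pi * Complex.I / ((ν : ℂ) ^ 2 * B₀)
  have hκ : κ ≠ 0 := div_ne_zero (by simp [Real.pi_ne_zero])
    (mul_ne_zero (pow_ne_zero _ (Nat.cast_ne_zero.2 (by omega))) hB)
  have hmain : ∀ c : ℂ, -(2 * Real.pi * Complex.I) / ((ν : ℂ) ^ 2 * B₀ * (c - c₁))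
      = -κ / (c - c₁) := fun c => by rw [← div_div, neg_div]
  have hcnκ : ∀ n : ℕ, cn n = κ / n := fun n => by rw [hcn, div_div]
  refine ⟨‖κ‖ ^ β / 2, by positivity, ?_⟩
  filter_upwards [eventually_le_norm_and_existsUnique_root hκ hβ.1 hβ.2 hρ hha.differentiableOn hhb]
    with n hn
  simpa only [hmain, hcnκ, hrn] using hn

/-- Rouché argument in the parabolic case `ν ≥ 2`: with `c(n) = 2πi/(ν²B₀n)` and
`r_n = |c(n)|^(1+β)`, on the circle `|c - (c₁+c(n))| = r_n` the main term
`-2πi/(ν²B₀(c-c₁)) + n` is bounded below by `C'n^(1-β)`, and the equation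
`-2πi/(ν²B₀(c-c₁)) + n + h(c) = 0` has exactly one solution in `D(c₁+c(n), r_n)`. -/
theorem stmt14 (c₁ B₀ : ℂ) (hB : B₀ ≠ 0) (ν : ℕ) (hν : 2 ≤ ν)
    (β : ℝ) (hβ : β ∈ Set.Ioo 0 1) (ρ C : ℝ) (hρ : 0 < ρ) (hC : 0 ≤ C)
    (h : ℂ → ℂ)
    (hha : AnalyticOnNhd ℂ h (Metric.ball c₁ ρ \ {c₁}))
    (hhb : ∀ c ∈ Metric.ball c₁ ρ \ {c₁}, ‖h c‖ ≤ C)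
    (cn : ℕ → ℂ)
    (hcn : ∀ n : ℕ, cn n = 2 * Real.pi * Complex.I / ((ν : ℂ) ^ 2 * B₀ * n))
    (rn : ℕ → ℝ) (hrn : ∀ n : ℕ, rn n = ‖cn n‖ ^ ((1:ℝ) + β)) :
    ∃ C' > 0, ∀ᶠ n in Filter.atTop,
      (∀ c : ℂ, ‖c - (c₁ + cn n)‖ = rn n →
        C' * (n : ℝ) ^ ((1:ℝ) - β)
          ≤ ‖-(2 * Real.pi * Complex.I) / ((ν : ℂ) ^ 2 * B₀ * (c - c₁)) + n‖) ∧
      (∃! c : ℂ, c ∈ Metric.ball (c₁ + cn n) (rn n) ∧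
        -(2 * Real.pi * Complex.I) / ((ν : ℂ) ^ 2 * B₀ * (c - c₁)) + n + h c = 0) :=
  stmt14_general c₁ B₀ hB ν hν β hβ ρ C hρ h hha hhb cn hcn rn hrn
end
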